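/- arXiv:2105.02715 — 9 statements merged into one kernel-verified Lean document; each statement's English description precedes it below -/
import Mathlib

section
/- Let M be an n×n generalized tournament matrix and X, Y a bipartition of {1,…,n} with |X| ≥ 2 and |Y| ≥ 2. If rank(M[X,Y]) ≤ 1 and rank(M[Y,X]) ≤ 1, then X or Y is a nontrivial clan of M. -/
def IsGTM {n : ℕ} (M : Matrix (Fin n) (Fin n) ℝ) : Prop :=
  (∀ i j, 0 ≤ M i j) ∧ M + M.transpose = (Matrix.of fun _ _ => (1 : ℝ)) - 1

/-- A clan of a matrix. -/
def IsClan {m : Type*} (M : Matrix m m ℝ) (X : Set m) : Prop :=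
  ∀ i ∈ X, ∀ j ∈ X, ∀ k ∉ X, M i k = M j k ∧ M k i = M k j

/-!
Write `A = M[X,Y]`. Since `M + Mᵀ = J - I`, the matrix `M[Y,X]` is `(J - A)ᵀ`, so every `2 × 2`
minor `(a b; c d)` of `A` satisfies both `ad = bc` and `(1-a)(1-d) = (1-b)(1-c)`. Together these
give `a + d = b + c`, hence `(a - b)(a - c) = 0`: each `2 × 2` submatrix of `A` has equal columns
or equal rows. A pair of distinct entries in one column then forces all columns of `A` to be equal.
So either all rows of `A` agree, making `X` a clan, or all its columns agree, making `Y` a clan.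
-/

theorem Matrix.mul_eq_mul_of_rank_le_one {m n K : Type*} [Fintype n] [Field K]
    (A : Matrix m n K) (hA : A.rank ≤ 1) (i j : m) (k l : n) :
    A i k * A j l = A i l * A j k := by
  set B := A.submatrix ![i, j] ![k, l]
  have hdet : B.det = 0 := by
    by_contra hB
    have hrank : B.rank = 2 :=
      (rank_of_det_mem_nonZeroDivisors (mem_nonZeroDivisors_of_ne_zero hB)).trans
        (Fintype.card_fin 2)
    have : B.rank ≤ 1 := (rank_submatrix_le A _ _).trans hA
    omega
  rw [Matrix.det_fin_two] at hdet
  exact sub_eq_zero.1 hdet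

theorem eq_and_eq_or_eq_and_eq_of_mul_eq_of_one_sub_mul_eq {K : Type*} [Field K] {a b c d : K}
    (h : a * d = b * c) (h' : (1 - a) * (1 - d) = (1 - b) * (1 - c)) :
    (a = b ∧ c = d) ∨ (a = c ∧ b = d) := by
  have hsum : a + d = b + c := by linear_combination h - h'
  have : (a - b) * (a - c) = 0 := by linear_combination a * hsum - h
  rcases mul_eq_zero.1 this with hab | hac
  · exact Or.inl ⟨by linear_combination hab, by linear_combination hab - hsum⟩
  · exact Or.inr ⟨by linear_combination hac, by linear_combination hac - hsum⟩

theorem rows_eq_or_cols_eq_of_forall_rows_eq_or_cols_eq {α β γ : Type*} (A : α → β → γ)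
    (h : ∀ i j k l, (A i k = A i l ∧ A j k = A j l) ∨ (A i k = A j k ∧ A i l = A j l)) :
    (∀ i j k, A i k = A j k) ∨ (∀ i k l, A i k = A i l) := by
  refine or_iff_not_imp_left.2 fun hne => ?_
  simp only [not_forall] at hne
  obtain ⟨i, j, k, hijk⟩ := hne
  have hrow : ∀ l, A i l = A i k := fun l =>
    (h i j k l).elim (fun hrows => hrows.1.symm) (fun hcols => absurd hcols.1 hijk)
  intro p u v
  rcases h i p u v with hrows | hcols
  · exact hrows.2
  · rw [← hcols.1, ← hcols.2, hrow u, hrow v]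

theorem Matrix.rows_eq_or_cols_eq_of_rank_le_one_of_add_eq_one {m n K : Type*} [Fintype m]
    [Fintype n] [Field K] (A : Matrix m n K) (B : Matrix n m K) (hA : A.rank ≤ 1) (hB : B.rank ≤ 1)
    (hAB : ∀ i k, A i k + B k i = 1) :
    (∀ i j k, A i k = A j k) ∨ (∀ i k l, A i k = A i l) := by
  refine rows_eq_or_cols_eq_of_forall_rows_eq_or_cols_eq A fun i j k l => ?_
  have hB' : ∀ i k, B k i = 1 - A i k := fun i k => by linear_combination hAB i k
  have := B.mul_eq_mul_of_rank_le_one hB k l i j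
  rw [hB', hB', hB', hB'] at this
  exact eq_and_eq_or_eq_and_eq_of_mul_eq_of_one_sub_mul_eq
    (A.mul_eq_mul_of_rank_le_one hA i j k l) (by linear_combination this)

namespace IsGTM

variable {n : ℕ} {M : Matrix (Fin n) (Fin n) ℝ}

theorem add_apply_swap (hM : IsGTM M) {i j : Fin n} (hij : i ≠ j) : M i j + M j i = 1 := by
  simpa [Matrix.one_apply_ne hij] using congrFun (congrFun hM.2 i) j

theorem isClan_of_rows_eq (hM : IsGTM M) {X : Set (Fin n)}
    (h : ∀ i ∈ X, ∀ j ∈ X, ∀ k ∉ X, M i k = M j k) : IsClan M X := by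
  intro i hi j hj k hk
  have hik := hM.add_apply_swap (ne_of_mem_of_not_mem hi hk)
  have hjk := hM.add_apply_swap (ne_of_mem_of_not_mem hj hk)
  exact ⟨h i hi j hj k hk, by linear_combination hik - hjk - h i hi j hj k hk⟩

theorem isClan_of_cols_eq (hM : IsGTM M) {X : Set (Fin n)}
    (h : ∀ i ∈ X, ∀ j ∈ X, ∀ k ∉ X, M k i = M k j) : IsClan M X := by
  intro i hi j hj k hk
  have hik := hM.add_apply_swap (ne_of_mem_of_not_mem hi hk)
  have hjk := hM.add_apply_swap (ne_of_mem_of_not_mem hj hk)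
  exact ⟨by linear_combination hik - hjk - h i hi j hj k hk, h i hi j hj k hk⟩

end IsGTM

theorem stmt2 {n : ℕ} (M : Matrix (Fin n) (Fin n) ℝ) (hM : IsGTM M)
    (X Y : Finset (Fin n)) (hdisj : Disjoint X Y) (hunion : X ∪ Y = Finset.univ)
    (hX : 2 ≤ X.card) (hY : 2 ≤ Y.card)
    (hrXY : (M.submatrix (fun i : ↥X => (i : Fin n)) (fun j : ↥Y => (j : Fin n))).rank ≤ 1)
    (hrYX : (M.submatrix (fun i : ↥Y => (i : Fin n)) (fun j : ↥X => (j : Fin n))).rank ≤ 1) :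
    (IsClan M (↑X : Set (Fin n)) ∧ (↑X : Set (Fin n)) ≠ Set.univ) ∨
      (IsClan M (↑Y : Set (Fin n)) ∧ (↑Y : Set (Fin n)) ≠ Set.univ) := by
  have hX' : ∀ k, k ∉ Y → k ∈ X := fun k hk =>
    (Finset.mem_union.1 (hunion ▸ Finset.mem_univ k)).resolve_right hk
  have hY' : ∀ k, k ∉ X → k ∈ Y := fun k hk =>
    (Finset.mem_union.1 (hunion ▸ Finset.mem_univ k)).resolve_left hk
  obtain ⟨x, hx⟩ := Finset.card_pos.1 (by omega : 0 < X.card)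
  obtain ⟨y, hy⟩ := Finset.card_pos.1 (by omega : 0 < Y.card)
  rcases Matrix.rows_eq_or_cols_eq_of_rank_le_one_of_add_eq_one _ _ hrXY hrYX
    (fun i k => hM.add_apply_swap (Finset.disjoint_iff_ne.1 hdisj _ i.2 _ k.2))
    with hrows | hcols
  · refine Or.inl ⟨hM.isClan_of_rows_eq fun i hi j hj k hk => ?_,
      (Set.ne_univ_iff_exists_notMem _).2 ⟨y, Finset.disjoint_right.1 hdisj hy⟩⟩
    exact hrows ⟨i, hi⟩ ⟨j, hj⟩ ⟨k, hY' k hk⟩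
  · refine Or.inr ⟨hM.isClan_of_cols_eq fun i hi j hj k hk => ?_,
      (Set.ne_univ_iff_exists_notMem _).2 ⟨x, Finset.disjoint_left.1 hdisj hx⟩⟩
    exact hcols ⟨k, hX' k hk⟩ ⟨i, hi⟩ ⟨j, hj⟩
end

section
/- If X and Y are clans of a matrix M with X ∩ Y ≠ ∅, then X ∪ Y is a clan of M. -/
theorem isClan_of_forall_agree {m : Type*} {M : Matrix m m ℝ} {S : Set m} (a : m)
    (h : ∀ i ∈ S, ∀ k ∉ S, M i k = M a k ∧ M k i = M k a) : IsClan M S := by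
  intro i hi j hj k hk
  obtain ⟨hik, hki⟩ := h i hi k hk
  obtain ⟨hjk, hkj⟩ := h j hj k hk
  exact ⟨hik.trans hjk.symm, hki.trans hkj.symm⟩

theorem IsClan.union {m : Type*} {M : Matrix m m ℝ} {X Y : Set m}
    (hX : IsClan M X) (hY : IsClan M Y) (h : (X ∩ Y).Nonempty) : IsClan M (X ∪ Y) := by
  obtain ⟨a, haX, haY⟩ := h
  refine isClan_of_forall_agree a fun i hi k hk => ?_
  rcases hi with hiX | hiY
  · exact hX i hiX a haX k fun hkX => hk (Or.inl hkX)
  · exact hY i hiY a haY k fun hkY => hk (Or.inr hkY)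

theorem stmt4 {n : ℕ} (M : Matrix (Fin n) (Fin n) ℝ) (X Y : Set (Fin n))
    (hX : IsClan M X) (hY : IsClan M Y) (h : (X ∩ Y).Nonempty) :
    IsClan M (X ∪ Y) :=
  hX.union hY h
end

section
/- If X and Y are clans of a matrix M with X \ Y ≠ ∅, then Y \ X is a clan of M. -/
/-! For `k ∈ X ∩ Y`, `i ∉ X` and a witness `w ∈ X \ Y`, the clan `X` gives `M i k = M i w`,
and the clan `Y` makes `M i w` independent of `i ∈ Y`; columns are symmetric. For `k ∉ Y` the
clan `Y` applies directly. -/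

theorem IsClan.diff {m : Type*} {M : Matrix m m ℝ} {X Y : Set m}
    (hX : IsClan M X) (hY : IsClan M Y) (h : (X \ Y).Nonempty) : IsClan M (Y \ X) := by
  obtain ⟨w, hwX, hwY⟩ := h
  rintro i ⟨hiY, hiX⟩ j ⟨hjY, hjX⟩ k hk
  by_cases hkY : k ∈ Y
  · have hkX : k ∈ X := by_contra fun hkX ↦ hk ⟨hkY, hkX⟩
    obtain ⟨hki, hik⟩ := hX k hkX w hwX i hiX
    obtain ⟨hkj, hjk⟩ := hX k hkX w hwX j hjX
    obtain ⟨hiw, hwi⟩ := hY i hiY j hjY w hwY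
    exact ⟨hik.trans (hiw.trans hjk.symm), hki.trans (hwi.trans hkj.symm)⟩
  · exact hY i hiY j hjY k hkY

theorem stmt5 {n : ℕ} (M : Matrix (Fin n) (Fin n) ℝ) (X Y : Set (Fin n))
    (hX : IsClan M X) (hY : IsClan M Y) (h : (X \ Y).Nonempty) :
    IsClan M (Y \ X) :=
  hX.diff hY h
end

section
/- If X is a clan of a matrix M, then reversing the clan (replacing m_{ij} by m_{ji} for all i,j ∈ X) preserves all principal minors: for every subset S of indices, det(Inv(M,X)[S]) = det(M[S]). -/
open Classical in
/-- Clan reversal: replace `M i j` by `M j i` for `i, j ∈ X`. -/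
noncomputable def ClanInv {n : ℕ} (M : Matrix (Fin n) (Fin n) ℝ) (X : Set (Fin n)) :
    Matrix (Fin n) (Fin n) ℝ :=
  fun i j => if i ∈ X ∧ j ∈ X then M j i else M i j

open Matrix Filter Topology

variable {R 𝕜 p q : Type*} [Fintype p]

theorem Matrix.mul_transpose_mul_of_rows_eq_of_cols_eq [CommSemiring R] {B : Matrix p q R}
    {C : Matrix q p R} (hB : ∀ i i', B i = B i') (hC : ∀ j j', Cᵀ j = Cᵀ j')
    (N : Matrix p p R) : C * Nᵀ * B = C * N * B := by
  ext i j
  simp only [mul_apply, transpose_apply, Finset.sum_mul]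
  rw [Finset.sum_comm]
  refine Finset.sum_congr rfl fun k _ => Finset.sum_congr rfl fun l _ => ?_
  rw [show C i k = C i l from congrFun (hC k l) i, hB l k]

variable [Fintype q] [DecidableEq p] [DecidableEq q]

theorem Matrix.det_fromBlocks_transpose₁₁_of_isUnit [CommRing R] {A : Matrix p p R}
    (hA : IsUnit A) {B : Matrix p q R} {C : Matrix q p R} (D : Matrix q q R)
    (hB : ∀ i i', B i = B i') (hC : ∀ j j', Cᵀ j = Cᵀ j') :
    (fromBlocks Aᵀ B C D).det = (fromBlocks A B C D).det := by
  have := hA.invertible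
  have : Invertible Aᵀ := invertibleTranspose A
  rw [det_fromBlocks₁₁, det_fromBlocks₁₁, det_transpose, ← transpose_invOf,
    mul_transpose_mul_of_rows_eq_of_cols_eq hB hC]

theorem Matrix.det_fromBlocks_transpose₁₁ [NontriviallyNormedField 𝕜] (A : Matrix p p 𝕜)
    {B : Matrix p q 𝕜} {C : Matrix q p 𝕜} (D : Matrix q q 𝕜)
    (hB : ∀ i i', B i = B i') (hC : ∀ j j', Cᵀ j = Cᵀ j') :
    (fromBlocks Aᵀ B C D).det = (fromBlocks A B C D).det := by
  have hunit : ∀ᶠ t in 𝓝[≠] (0 : 𝕜), IsUnit (A + t • 1) := by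
    filter_upwards [nhdsNE_le_cofinite 0 (finite_spectrum (-A)).compl_mem_cofinite] with t ht
    simpa [Algebra.algebraMap_eq_smul_one, add_comm] using spectrum.notMem_iff.mp ht
  have hcont : Continuous fun t : 𝕜 => A + t • 1 := by fun_prop
  have hlhs : Continuous fun t : 𝕜 => (fromBlocks (A + t • 1)ᵀ B C D).det :=
    (hcont.matrix_transpose.matrix_fromBlocks continuous_const continuous_const
      continuous_const).matrix_det
  have hrhs : Continuous fun t : 𝕜 => (fromBlocks (A + t • 1) B C D).det :=
    (hcont.matrix_fromBlocks continuous_const continuous_const continuous_const).matrix_det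
  refine tendsto_nhds_unique_of_eventuallyEq (l := 𝓝[≠] (0 : 𝕜))
    ((hlhs.tendsto' 0 _ (by simp)).mono_left nhdsWithin_le_nhds)
    ((hrhs.tendsto' 0 _ (by simp)).mono_left nhdsWithin_le_nhds) ?_
  filter_upwards [hunit] with t ht using det_fromBlocks_transpose₁₁_of_isUnit ht D hB hC

theorem IsClan.submatrix {ι κ : Type*} {M : Matrix ι ι ℝ} {X : Set ι} (hX : IsClan M X)
    (f : κ → ι) : IsClan (M.submatrix f f) (f ⁻¹' X) :=
  fun i hi j hj k hk => hX (f i) hi (f j) hj (f k) hk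

theorem IsClan.det_reverse {ι : Type*} [Fintype ι] [DecidableEq ι] {M : Matrix ι ι ℝ}
    {X : Set ι} [DecidablePred (· ∈ X)] (hX : IsClan M X) :
    (of fun i j => if i ∈ X ∧ j ∈ X then M j i else M i j).det = M.det := by
  set N := of fun i j => if i ∈ X ∧ j ∈ X then M j i else M i j
  have h₁₁ : N.toBlock (· ∈ X) (· ∈ X) = (M.toBlock (· ∈ X) (· ∈ X))ᵀ := by
    ext i j
    simp [N, i.2, j.2]
  have h₁₂ : N.toBlock (· ∈ X) (· ∉ X) = M.toBlock (· ∈ X) (· ∉ X) := by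
    ext i j
    simp [N, j.2]
  have h₂₁ : N.toBlock (· ∉ X) (· ∈ X) = M.toBlock (· ∉ X) (· ∈ X) := by
    ext i j
    simp [N, i.2]
  have h₂₂ : N.toBlock (· ∉ X) (· ∉ X) = M.toBlock (· ∉ X) (· ∉ X) := by
    ext i j
    simp [N, i.2]
  rw [det_toBlock N (· ∈ X), det_toBlock M (· ∈ X), h₁₁, h₁₂, h₂₁, h₂₂]
  exact det_fromBlocks_transpose₁₁ _ _
    (fun i i' => funext fun k => (hX i i.2 i' i'.2 k k.2).1)
    (fun i i' => funext fun k => (hX i i.2 i' i'.2 k k.2).2)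

theorem stmt7 {n : ℕ} (M : Matrix (Fin n) (Fin n) ℝ) (X : Set (Fin n))
    (hX : IsClan M X) (S : Finset (Fin n)) :
    ((ClanInv M X).submatrix (fun i : ↥S => (i : Fin n)) (fun i : ↥S => (i : Fin n))).det =
      (M.submatrix (fun i : ↥S => (i : Fin n)) (fun i : ↥S => (i : Fin n))).det := by
  classical
  exact (hX.submatrix _).det_reverse
end

section
/- Let A = (a_{ij}) and B = (b_{ij}) be n×n generalized tournament matrices with equal corresponding principal minors of orders 2 and 3. If a_{ij} = 1 - b_{ij} with a_{ij} ≠ 1/2, and a_{ik} = b_{ik} ≠ 1/2 and a_{jk} = b_{jk} ≠ 1/2, then a_{ik} = a_{jk} = b_{ik} = b_{jk}. -/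
/-- Equality of principal minors over index sets of the given cardinalities. -/
def SameMinors {n : ℕ} (A B : Matrix (Fin n) (Fin n) ℝ) (P : ℕ → Prop) : Prop :=
  ∀ S : Finset (Fin n), P S.card →
    (A.submatrix (fun i : ↥S => (i : Fin n)) (fun i : ↥S => (i : Fin n))).det =
      (B.submatrix (fun i : ↥S => (i : Fin n)) (fun i : ↥S => (i : Fin n))).det

/-!
The principal minor of a generalized tournament matrix on `{i, j, k}` is
`a c (1 - b) + b (1 - a) (1 - c)` with `a = M i j`, `b = M i k`, `c = M j k`.
Replacing `a` by `1 - a` while keeping `b` and `c` changes it by `(2a - 1)(c - b)`,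
so equality of the two minors with `a ≠ 1/2` forces `b = c`.
-/

open Finset

theorem Matrix.det_submatrix_image_eq {ι κ R : Type*} [DecidableEq ι] [Fintype κ]
    [DecidableEq κ] [CommRing R] (M : Matrix ι ι R) {f : κ → ι} (hf : Function.Injective f) :
    (M.submatrix (fun x : ↥(univ.image f) => (x : ι))
        (fun x : ↥(univ.image f) => (x : ι))).det = (M.submatrix f f).det := by
  let e : κ ≃ ↥(univ.image f) :=
    Equiv.ofBijective (fun x => ⟨f x, mem_image_of_mem f (mem_univ x)⟩)
      ⟨fun x y hxy => hf (congrArg Subtype.val hxy), fun ⟨y, hy⟩ => by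
        obtain ⟨x, -, rfl⟩ := mem_image.1 hy
        exact ⟨x, rfl⟩⟩
  exact (det_submatrix_equiv_self e _).symm

theorem SameMinors.det_submatrix_eq {n m : ℕ} {A B : Matrix (Fin n) (Fin n) ℝ} {P : ℕ → Prop}
    (h : SameMinors A B P) {f : Fin m → Fin n} (hf : Function.Injective f) (hm : P m) :
    (A.submatrix f f).det = (B.submatrix f f).det := by
  have hcard : (univ.image f).card = m := by
    rw [card_image_of_injective _ hf, card_univ, Fintype.card_fin]
  rw [← Matrix.det_submatrix_image_eq A hf, ← Matrix.det_submatrix_image_eq B hf]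
  exact h _ (hcard.symm ▸ hm)

namespace IsGTM

variable {n : ℕ} {M : Matrix (Fin n) (Fin n) ℝ}

theorem apply_self (hM : IsGTM M) (p : Fin n) : M p p = 0 := by
  have := congrFun (congrFun hM.2 p) p
  simp only [Matrix.add_apply, Matrix.transpose_apply, Matrix.sub_apply, Matrix.of_apply,
    Matrix.one_apply_eq] at this
  linarith

theorem apply_swap (hM : IsGTM M) {p q : Fin n} (hpq : p ≠ q) : M q p = 1 - M p q := by
  have := congrFun (congrFun hM.2 p) q
  simp only [Matrix.add_apply, Matrix.transpose_apply, Matrix.sub_apply, Matrix.of_apply,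
    Matrix.one_apply_ne hpq] at this
  linarith

theorem det_submatrix_three (hM : IsGTM M) {i j k : Fin n}
    (hij : i ≠ j) (hik : i ≠ k) (hjk : j ≠ k) :
    (M.submatrix ![i, j, k] ![i, j, k]).det =
      M i j * M j k * (1 - M i k) + M i k * (1 - M i j) * (1 - M j k) := by
  rw [Matrix.det_fin_three]
  simp only [Matrix.submatrix_apply, Matrix.cons_val_zero, Matrix.cons_val_one,
    Matrix.cons_val_two, Matrix.head_cons, Matrix.tail_cons]
  rw [hM.apply_self i, hM.apply_self j, hM.apply_self k, hM.apply_swap hij,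
    hM.apply_swap hik, hM.apply_swap hjk]
  ring

end IsGTM

theorem injective_vecCons_three {α : Type*} {a b c : α} (hab : a ≠ b) (hac : a ≠ c)
    (hbc : b ≠ c) : Function.Injective ![a, b, c] := by
  intro x y hxy
  fin_cases x <;> fin_cases y <;> simp_all [eq_comm]

theorem stmt8_general {n : ℕ} (A B : Matrix (Fin n) (Fin n) ℝ)
    (hA : IsGTM A) (hB : IsGTM B)
    (hmin : SameMinors A B (fun k => k = 2 ∨ k = 3))
    (i j k : Fin n) (hij : i ≠ j) (hik : i ≠ k) (hjk : j ≠ k)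
    (h1 : A i j = 1 - B i j) (h1' : A i j ≠ 1 / 2)
    (h2 : A i k = B i k)
    (h3 : A j k = B j k) :
    A i k = A j k ∧ A i k = B i k ∧ A j k = B j k := by
  have hdet := hmin.det_submatrix_eq (injective_vecCons_three hij hik hjk) (Or.inr rfl)
  rw [hA.det_submatrix_three hij hik hjk, hB.det_submatrix_three hij hik hjk,
    ← h2, ← h3, show B i j = 1 - A i j by linarith] at hdet
  have key : (2 * A i j - 1) * (A j k - A i k) = 0 := by linear_combination hdet
  rcases mul_eq_zero.1 key with h | h
  · exact absurd (by linarith) h1'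
  · exact ⟨by linarith, h2, h3⟩

theorem stmt8 {n : ℕ} (A B : Matrix (Fin n) (Fin n) ℝ)
    (hA : IsGTM A) (hB : IsGTM B)
    (hmin : SameMinors A B (fun k => k = 2 ∨ k = 3))
    (i j k : Fin n) (hij : i ≠ j) (hik : i ≠ k) (hjk : j ≠ k)
    (h1 : A i j = 1 - B i j) (h1' : A i j ≠ 1 / 2)
    (h2 : A i k = B i k) (h2' : A i k ≠ 1 / 2)
    (h3 : A j k = B j k) (h3' : A j k ≠ 1 / 2) :
    A i k = A j k ∧ A i k = B i k ∧ A j k = B j k :=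
  stmt8_general A B hA hB hmin i j k hij hik hjk h1 h1' h2 h3
end

section
/- Let A and B be n×n generalized tournament matrices with equal corresponding principal minors of orders 2 and 3, and let i,j,k be indices with a_{ij} = b_{ij} ≠ 1/2 and {i,k},{j,k} ∉ P₌, i.e. for each of the pairs {i,k} and {j,k} either the entries of A and B differ or both equal 1/2 (e.g. a_{ik} ≠ b_{ik} or a_{ik} = b_{ik} = 1/2). Then a_{ik} = 1/2 if and only if a_{jk} = 1/2. -/
lemma det_pair {n : ℕ} (M : Matrix (Fin n) (Fin n) ℝ) (i j : Fin n) (hij : i ≠ j) :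
    (M.submatrix (fun x : ↥({i, j} : Finset (Fin n)) => (x : Fin n))
       (fun x : ↥({i, j} : Finset (Fin n)) => (x : Fin n))).det
    = M i i * M j j - M i j * M j i := by
  set S : Finset (Fin n) := {i, j} with hS
  have hi : i ∈ S := by simp [hS]
  have hj : j ∈ S := by simp [hS]
  let f : Fin 2 → ↥S := ![⟨i, hi⟩, ⟨j, hj⟩]
  have hinj : Function.Injective f := by
    intro a b hab
    fin_cases a <;> fin_cases b <;> simp_all [f]
  have hcard : Fintype.card (Fin 2) = Fintype.card ↥S := by
    rw [Fintype.card_coe, Fintype.card_fin, hS, Finset.card_pair hij]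
  have hbij : Function.Bijective f :=
    (Fintype.bijective_iff_injective_and_card f).mpr ⟨hinj, hcard⟩
  let e : Fin 2 ≃ ↥S := Equiv.ofBijective f hbij
  have h := Matrix.det_submatrix_equiv_self e
    (M.submatrix (fun x : ↥S => (x : Fin n)) (fun x : ↥S => (x : Fin n)))
  rw [← h, Matrix.submatrix_submatrix, Matrix.det_fin_two]
  simp [e, f, Matrix.submatrix_apply]

lemma det_triple {n : ℕ} (M : Matrix (Fin n) (Fin n) ℝ) (i j k : Fin n)
    (hij : i ≠ j) (hik : i ≠ k) (hjk : j ≠ k)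
    (dii : M i i = 0) (djj : M j j = 0) (dkk : M k k = 0) :
    (M.submatrix (fun x : ↥({i, j, k} : Finset (Fin n)) => (x : Fin n))
       (fun x : ↥({i, j, k} : Finset (Fin n)) => (x : Fin n))).det
    = M i j * M j k * M k i + M i k * M j i * M k j := by
  set S : Finset (Fin n) := {i, j, k} with hS
  have hi : i ∈ S := by simp [hS]
  have hj : j ∈ S := by simp [hS]
  have hk : k ∈ S := by simp [hS]
  let f : Fin 3 → ↥S := ![⟨i, hi⟩, ⟨j, hj⟩, ⟨k, hk⟩]
  have hinj : Function.Injective f := by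
    intro a b hab
    fin_cases a <;> fin_cases b <;> simp_all [f]
  have hcard : Fintype.card (Fin 3) = Fintype.card ↥S := by
    rw [Fintype.card_coe, Fintype.card_fin, hS,
      Finset.card_insert_of_notMem (by simp [hij, hik]), Finset.card_pair hjk]
  have hbij : Function.Bijective f :=
    (Fintype.bijective_iff_injective_and_card f).mpr ⟨hinj, hcard⟩
  let e : Fin 3 ≃ ↥S := Equiv.ofBijective f hbij
  have h := Matrix.det_submatrix_equiv_self e
    (M.submatrix (fun x : ↥S => (x : Fin n)) (fun x : ↥S => (x : Fin n)))
  rw [← h, Matrix.submatrix_submatrix, Matrix.det_fin_three]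
  simp [e, f, Matrix.submatrix_apply, dii, djj, dkk]

theorem stmt9 {n : ℕ} (A B : Matrix (Fin n) (Fin n) ℝ)
    (hA : IsGTM A) (hB : IsGTM B)
    (hmin : SameMinors A B (fun k => k = 2 ∨ k = 3))
    (i j k : Fin n) (hij : i ≠ j) (hik : i ≠ k) (hjk : j ≠ k)
    (h1 : A i j = B i j) (h1' : A i j ≠ 1 / 2)
    (h2 : ¬(A i k = B i k ∧ A i k ≠ 1 / 2))
    (h3 : ¬(A j k = B j k ∧ A j k ≠ 1 / 2)) :
    A i k = 1 / 2 ↔ A j k = 1 / 2 := by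
  -- basic GTM facts
  have gtm : ∀ (M : Matrix (Fin n) (Fin n) ℝ), IsGTM M →
      (∀ a, M a a = 0) ∧ (∀ a b, a ≠ b → M a b + M b a = 1) := by
    intro M hM
    constructor
    · intro a
      have := congrFun (congrFun hM.2 a) a
      simp [Matrix.one_apply, Matrix.add_apply, Matrix.transpose_apply] at this
      linarith
    · intro a b hab
      have := congrFun (congrFun hM.2 a) b
      simp [Matrix.one_apply, Matrix.add_apply, Matrix.transpose_apply, hab] at this
      linarith
  obtain ⟨dA, sA⟩ := gtm A hA
  obtain ⟨dB, sB⟩ := gtm B hB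
  -- order-2 minor facts
  have pair2 : ∀ a b : Fin n, a ≠ b → B a b = A a b ∨ B a b = 1 - A a b := by
    intro a b hab
    have hm := hmin {a, b} (Or.inl (Finset.card_pair hab))
    rw [det_pair A a b hab, det_pair B a b hab] at hm
    have hba : A b a = 1 - A a b := by have := sA a b hab; linarith
    have hba' : B b a = 1 - B a b := by have := sB a b hab; linarith
    rw [dA a, dA b, dB a, dB b, hba, hba'] at hm
    have : (B a b - A a b) * (B a b + A a b - 1) = 0 := by ring_nf; nlinarith [hm]
    rcases mul_eq_zero.mp this with h | h
    · left; linarith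
    · right; linarith
  -- B i k = 1 - A i k
  have hBik : B i k = 1 - A i k := by
    rcases pair2 i k hik with h | h
    · have : A i k = 1/2 := by
        by_contra hc; exact h2 ⟨h.symm, hc⟩
      rw [h, this]; norm_num
    · exact h
  have hBjk : B j k = 1 - A j k := by
    rcases pair2 j k hjk with h | h
    · have : A j k = 1/2 := by
        by_contra hc; exact h3 ⟨h.symm, hc⟩
      rw [h, this]; norm_num
    · exact h
  -- order-3 minor
  have hcard3 : ({i, j, k} : Finset (Fin n)).card = 3 := by
    rw [Finset.card_insert_of_notMem (by simp [hij, hik]), Finset.card_pair hjk]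
  have hm3 := hmin {i, j, k} (Or.inr hcard3)
  rw [det_triple A i j k hij hik hjk (dA i) (dA j) (dA k),
      det_triple B i j k hij hik hjk (dB i) (dB j) (dB k)] at hm3
  have eki : A k i = 1 - A i k := by have := sA i k hik; linarith
  have ekj : A k j = 1 - A j k := by have := sA j k hjk; linarith
  have eji : A j i = 1 - A i j := by have := sA i j hij; linarith
  have eki' : B k i = 1 - B i k := by have := sB i k hik; linarith
  have ekj' : B k j = 1 - B j k := by have := sB j k hjk; linarith
  have eji' : B j i = 1 - B i j := by have := sB i j hij; linarith
  rw [eki, ekj, eji, eki', ekj', eji', hBik, hBjk, ← h1] at hm3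
  -- hm3 : p r (1-q) + q(1-p)(1-r) = p(1-r)q + (1-q)(1-p)r  where p=Aij,q=Aik,r=Ajk
  have key : (A j k - A i k) * (2 * A i j - 1) = 0 := by nlinarith [hm3]
  have : A j k = A i k := by
    rcases mul_eq_zero.mp key with h | h
    · linarith
    · exact absurd (by linarith : A i j = 1/2) h1'
  rw [this]
end

section
/- Let Γ be an inseparable weighted oriented graph with n ≥ 5 vertices. Then Γ contains an induced subgraph on n-1 vertices that is inseparable. -/
/-- A weighted oriented graph on `V`: `Γ x y = some α` means there is an arc
`(x, y)` of weight `α`; no loops and no pair of opposite arcs. -/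
def WOriented {V : Type*} (Γ : V → V → Option ℝ) : Prop :=
  (∀ x, Γ x x = none) ∧ ∀ x y, Γ x y ≠ none → Γ y x = none

/-- A clan of a weighted oriented graph. -/
def WClan {V : Type*} (Γ : V → V → Option ℝ) (X : Set V) : Prop :=
  ∀ x ∉ X,
    (∀ a ∈ X, Γ x a = none ∧ Γ a x = none) ∨
    (∃ α : ℝ, ∀ a ∈ X, Γ x a = some α) ∨
    (∃ α : ℝ, ∀ a ∈ X, Γ a x = some α)

/-- Separability: the vertex set can be partitioned into two nonempty clans. -/
def WSeparable {V : Type*} (Γ : V → V → Option ℝ) : Prop :=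
  ∃ X Y : Set V, X.Nonempty ∧ Y.Nonempty ∧ Disjoint X Y ∧ X ∪ Y = Set.univ ∧
    WClan Γ X ∧ WClan Γ Y

/-!
An oriented graph is a 2-structure: the pair `(Γ a b, Γ b a)` labels `(a, b)`, and a separation
of a vertex set `W` is a split `W = X ⊔ Y` carrying a single label from `X` to `Y`.

Take a maximal inseparable proper subset `A` with at least two vertices. If `A = {w}ᶜ` we are
done. Otherwise `A ∪ {w}` is separable for every `w ∉ A`, and since `A` is inseparable the split
cuts off `w` alone, so `A` is a clan. Removing a vertex `a` of a proper clan cannot create a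
separation: `a` could be put back on the side of another vertex of `A`, or else the clan would
give a separation of the whole graph.

If there is no such `A`, all sets of three and four vertices are separable (they are proper as
`n ≥ 5`), and then a separation `X ⊔ Y` of `{v}ᶜ` forces `v` to see all other vertices with one
label, which separates `{v}` from the rest.
-/

namespace WGraph

open Set

variable {V α : Type*}

def label (Γ : V → V → α) (a b : V) : α × α := (Γ a b, Γ b a)

structure IsSplit (Γ : V → V → α) (W X Y : Set V) (ℓ : α × α) : Prop where
  left_nonempty : X.Nonempty
  right_nonempty : Y.Nonempty
  disjoint : Disjoint X Y
  union_eq : X ∪ Y = W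
  label_eq : ∀ a ∈ X, ∀ b ∈ Y, label Γ a b = ℓ

def SeparableOn (Γ : V → V → α) (W : Set V) : Prop := ∃ X Y ℓ, IsSplit Γ W X Y ℓ

def IsClan (Γ : V → V → α) (A : Set V) : Prop :=
  ∀ w ∉ A, ∀ a ∈ A, ∀ b ∈ A, label Γ w a = label Γ w b

variable {Γ : V → V → α} {W X Y A : Set V} {ℓ μ : α × α} {a b v w : V}

lemma label_swap (a b : V) : label Γ b a = (label Γ a b).swap := rfl

namespace IsSplit

lemma symm (h : IsSplit Γ W X Y ℓ) : IsSplit Γ W Y X ℓ.swap :=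
  ⟨h.right_nonempty, h.left_nonempty, h.disjoint.symm, by rw [union_comm, h.union_eq],
    fun b hb a ha => congrArg Prod.swap (h.label_eq a ha b hb)⟩

lemma flip (h : IsSplit Γ W X Y ℓ) : IsSplit (flip Γ) W Y X ℓ :=
  ⟨h.right_nonempty, h.left_nonempty, h.disjoint.symm, by rw [union_comm, h.union_eq],
    fun b hb a ha => h.label_eq a ha b hb⟩

lemma mem_or_mem (h : IsSplit Γ W X Y ℓ) {z : V} (hz : z ∈ W) : z ∈ X ∨ z ∈ Y := by
  rwa [← h.union_eq] at hz

lemma subset_left (h : IsSplit Γ W X Y ℓ) : X ⊆ W := h.union_eq ▸ subset_union_left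

lemma subset_right (h : IsSplit Γ W X Y ℓ) : Y ⊆ W := h.union_eq ▸ subset_union_right

lemma not_subset_left (h : IsSplit Γ W X Y ℓ) : ¬ W ⊆ X := fun hWX =>
  let ⟨_, hy⟩ := h.right_nonempty
  disjoint_right.mp h.disjoint hy (hWX (h.subset_right hy))

lemma label_eq_label (h : IsSplit Γ W X Y ℓ) {c d : V} (ha : a ∈ X) (hb : b ∈ Y) (hc : c ∈ X)
    (hd : d ∈ Y) : label Γ a b = label Γ c d :=
  (h.label_eq a ha b hb).trans (h.label_eq c hc d hd).symm

lemma subset_or_subset (h : IsSplit Γ W X Y ℓ) (hAW : A ⊆ W) (hA : ¬ SeparableOn Γ A) :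
    A ⊆ X ∨ A ⊆ Y := by
  by_contra! hc
  obtain ⟨⟨x, hxA, hxX⟩, ⟨y, hyA, hyY⟩⟩ := And.imp not_subset.mp not_subset.mp hc
  refine hA ⟨A ∩ X, A ∩ Y, ℓ, ⟨y, hyA, ?_⟩, ⟨x, hxA, ?_⟩, ?_, ?_, ?_⟩
  · exact (h.mem_or_mem (hAW hyA)).resolve_right hyY
  · exact (h.mem_or_mem (hAW hxA)).resolve_left hxX
  · exact h.disjoint.mono inter_subset_right inter_subset_right
  · rw [← inter_union_distrib_left, h.union_eq, inter_eq_left.mpr hAW]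
  · exact fun a ha b hb => h.label_eq a ha.2 b hb.2

lemma separableOn_univ (h : IsSplit Γ {v}ᶜ X Y ℓ) (hv : ∀ b ∈ Y, label Γ v b = ℓ) :
    SeparableOn Γ univ := by
  refine ⟨insert v X, Y, ℓ, h.left_nonempty.mono (subset_insert v X), h.right_nonempty,
    ?_, ?_, ?_⟩
  · exact disjoint_insert_left.mpr ⟨fun hv => h.subset_right hv rfl, h.disjoint⟩
  · rw [insert_union, h.union_eq, ← singleton_union, union_compl_self]
  · rintro a (rfl | ha) b hb
    exacts [hv b hb, h.label_eq a ha b hb]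

lemma image {U : Type*} {f : U → V} {X Y : Set U} (hf : Function.Injective f)
    (h : IsSplit (fun a b => Γ (f a) (f b)) univ X Y ℓ) :
    IsSplit Γ (range f) (f '' X) (f '' Y) ℓ := by
  refine ⟨h.left_nonempty.image f, h.right_nonempty.image f, ?_, ?_, ?_⟩
  · exact (disjoint_image_iff hf).mpr h.disjoint
  · rw [← image_union, h.union_eq, image_univ]
  · rintro _ ⟨a, ha, rfl⟩ _ ⟨b, hb, rfl⟩
    exact h.label_eq a ha b hb

end IsSplit

lemma SeparableOn.flip {W : Set V} (h : SeparableOn Γ W) : SeparableOn (flip Γ) W :=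
  let ⟨X, Y, ℓ, h⟩ := h
  ⟨Y, X, ℓ, h.flip⟩

lemma separableOn_univ_of_label_eq (hX : X.Nonempty) (hXc : Xᶜ.Nonempty)
    (hl : ∀ a ∈ X, ∀ b ∉ X, label Γ a b = ℓ) : SeparableOn Γ univ :=
  ⟨X, Xᶜ, ℓ, hX, hXc, disjoint_compl_right, union_compl_self X, hl⟩

lemma isClan_of_forall_separableOn_insert (hA : ¬ SeparableOn Γ A)
    (hins : ∀ w ∉ A, SeparableOn Γ (insert w A)) : IsClan Γ A := by
  intro w hw a ha b hb
  obtain ⟨X, Y, ℓ, h⟩ := hins w hw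
  wlog hAX : A ⊆ X generalizing X Y ℓ
  · exact this Y X ℓ.swap h.symm ((h.subset_or_subset (subset_insert w A) hA).resolve_left hAX)
  have hwY : w ∈ Y := by
    obtain ⟨y, hy⟩ := h.right_nonempty
    rcases h.subset_right hy with rfl | hyA
    · exact hy
    · exact absurd (hAX hyA) (disjoint_right.mp h.disjoint hy)
  exact congrArg Prod.swap (h.label_eq_label (hAX ha) hwY (hAX hb) hwY)

lemma IsSplit.separableOn_univ_of_isClan {q u : V} (h : IsSplit Γ {a}ᶜ X Y ℓ)
    (hA : IsClan Γ A) (ha : a ∈ A) (hq : q ∈ A) (hqY : q ∈ Y) (huX : u ∈ X) (hu : u ∉ A) :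
    SeparableOn Γ univ := by
  refine separableOn_univ_of_label_eq (X := X \ A) (ℓ := ℓ) ⟨u, huX, hu⟩
    ⟨a, fun haX => haX.2 ha⟩ ?_
  rintro x ⟨hxX, hxA⟩ z hz
  by_cases hzA : z ∈ A
  · rw [hA x hxA z hzA q hq]
    exact h.label_eq x hxX q hqY
  · have hza : z ≠ a := fun hza => hzA (hza ▸ ha)
    exact h.label_eq x hxX z ((h.mem_or_mem hza).resolve_left fun hzX => hz ⟨hzX, hzA⟩)

lemma IsClan.not_separableOn_compl (hU : ¬ SeparableOn Γ univ) (hA : IsClan Γ A)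
    (hAU : A ≠ univ) (ha : a ∈ A) (hb : b ∈ A) (hba : b ≠ a) : ¬ SeparableOn Γ {a}ᶜ := by
  rintro ⟨X, Y, ℓ, h⟩
  wlog hbX : b ∈ X generalizing X Y ℓ
  · exact this Y X ℓ.swap h.symm ((h.mem_or_mem hba).resolve_left hbX)
  by_cases hAY : ∃ q ∈ A, q ∈ Y
  · obtain ⟨q, hqA, hqY⟩ := hAY
    obtain ⟨u, hu⟩ : ∃ u, u ∉ A := by
      by_contra! hAall
      exact hAU (eq_univ_of_forall hAall)
    rcases h.mem_or_mem (fun hua : u = a => hu (hua ▸ ha)) with huX | huY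
    · exact hU (h.separableOn_univ_of_isClan hA ha hqA hqY huX hu)
    · exact hU (h.symm.separableOn_univ_of_isClan hA ha hb hbX huY hu)
  · push Not at hAY
    refine hU (h.separableOn_univ fun y hy => ?_)
    rw [← h.label_eq b hbX y hy]
    exact congrArg Prod.swap (hA y (fun hyA => hAY y hyA hy) a ha b hb)

lemma label_eq_or_of_separableOn_triple {p q r : V} (h : SeparableOn Γ {p, q, r}) :
    label Γ p q = label Γ p r ∨ label Γ q p = label Γ q r ∨ label Γ r p = label Γ r q := by
  obtain ⟨X, Y, ℓ, h⟩ := h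
  wlog hp : p ∈ X generalizing X Y ℓ
  · exact this Y X ℓ.swap h.symm ((h.mem_or_mem (by simp)).resolve_left hp)
  rcases h.mem_or_mem (show q ∈ ({p, q, r} : Set V) by simp) with hq | hq <;>
    rcases h.mem_or_mem (show r ∈ ({p, q, r} : Set V) by simp) with hr | hr
  · exact absurd (by simp [insert_subset_iff, hp, hq, hr]) h.not_subset_left
  · exact Or.inr (Or.inr (congrArg Prod.swap (h.label_eq_label hp hr hq hr)))
  · exact Or.inr (Or.inl (congrArg Prod.swap (h.label_eq_label hp hq hr hq)))
  · exact Or.inl (h.label_eq_label hp hq hp hr)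

lemma label_eq_of_separableOn_quad {y : V} (h : SeparableOn Γ {v, a, y, w})
    (hva : label Γ v a = μ) (hvy : label Γ v y = μ) (hwv : label Γ w v = ℓ)
    (hay : label Γ a y = ℓ) (hwy : label Γ w y = ℓ) (hμ : μ ≠ ℓ) (hμ' : μ ≠ ℓ.swap) :
    label Γ w a = ℓ := by
  obtain ⟨X, Y, ℓ', h⟩ := h
  wlog hv : v ∈ X generalizing X Y ℓ'
  · exact this Y X ℓ'.swap h.symm ((h.mem_or_mem (by simp)).resolve_left hv)
  -- the only split compatible with these labels is `{v, a, y} ⊔ {w}`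
  have hvw : label Γ v w = ℓ.swap := congrArg Prod.swap hwv
  have hya : label Γ y a = ℓ.swap := congrArg Prod.swap hay
  rcases h.mem_or_mem (show a ∈ ({v, a, y, w} : Set V) by simp) with ha | ha <;>
    rcases h.mem_or_mem (show y ∈ ({v, a, y, w} : Set V) by simp) with hy | hy <;>
    rcases h.mem_or_mem (show w ∈ ({v, a, y, w} : Set V) by simp) with hw | hw
  · exact absurd (by simp [insert_subset_iff, hv, ha, hy, hw]) h.not_subset_left
  · exact congrArg Prod.swap ((h.label_eq_label ha hw hv hw).trans hvw)
  · exact absurd (hvy.symm.trans ((h.label_eq_label hv hy ha hy).trans hay)) hμ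
  · exact absurd (hvy.symm.trans ((h.label_eq_label hv hy hv hw).trans hvw)) hμ'
  · exact absurd (hva.symm.trans ((h.label_eq_label hv ha hy ha).trans hya)) hμ'
  · exact absurd (hva.symm.trans ((h.label_eq_label hv ha hv hw).trans hvw)) hμ'
  · exact absurd (hvy.symm.trans ((h.label_eq_label hv hy hw hy).trans hwy)) hμ
  · exact absurd (hva.symm.trans ((h.label_eq_label hv ha hv hw).trans hvw)) hμ'

lemma IsSplit.label_eq_of_separableOn_small {x₀ y₀ : V} (hU : ¬ SeparableOn Γ univ)
    (hsmall : ∀ S : Set V, S.Nontrivial → S.encard ≤ 4 → SeparableOn Γ S)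
    (h : IsSplit Γ {v}ᶜ X Y ℓ) (hx₀ : x₀ ∈ X) (hx₀v : label Γ x₀ v ≠ ℓ) (hy₀ : y₀ ∈ Y)
    (hvy₀ : label Γ v y₀ ≠ ℓ) : ∀ a ∈ X, label Γ v a = label Γ v y₀ := by
  set μ := label Γ v y₀
  have hvX : ∀ {a}, a ∈ X → v ≠ a := fun ha hva => h.subset_left ha hva.symm
  have hsep : ∀ a ∈ X, ∀ c d, SeparableOn Γ {v, a, c, d} := fun a ha c d =>
    hsmall _ (nontrivial_of_mem_mem_ne (mem_insert _ _) (mem_insert_of_mem _ (mem_insert _ _))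
      (hvX ha)) (by
        grw [encard_insert_le, encard_insert_le, encard_insert_le, encard_singleton]; norm_num)
  have hdich : ∀ a ∈ X, label Γ v a = μ ∨ label Γ a v = ℓ := by
    intro a ha
    have hsep₃ : SeparableOn Γ {v, a, y₀} := by simpa using hsep a ha y₀ y₀
    rcases label_eq_or_of_separableOn_triple hsep₃ with hv | ha' | hy
    · exact Or.inl hv
    · exact Or.inr (ha'.trans (h.label_eq a ha y₀ hy₀))
    · exact absurd ((congrArg Prod.swap hy).trans (h.label_eq a ha y₀ hy₀)) hvy₀
  have hμ : μ ≠ ℓ.swap := fun hμ =>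
    hx₀v (congrArg Prod.swap (((hdich x₀ hx₀).resolve_right hx₀v).trans hμ))
  by_contra! hbad
  obtain ⟨a₀, ha₀, hva₀⟩ := hbad
  refine hU (separableOn_univ_of_label_eq (X := {w | w ∈ X ∧ label Γ w v = ℓ}) (ℓ := ℓ)
    ⟨a₀, ha₀, (hdich a₀ ha₀).resolve_left hva₀⟩ ⟨v, fun hv => hvX hv.1 rfl⟩ ?_)
  rintro w ⟨hwX, hwv⟩ z hz
  by_cases hzv : z = v
  · rwa [hzv]
  rcases h.mem_or_mem hzv with hzX | hzY
  · have hvz : label Γ v z = μ := (hdich z hzX).resolve_right fun hzv => hz ⟨hzX, hzv⟩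
    exact label_eq_of_separableOn_quad (hsep z hzX y₀ w) hvz rfl hwv (h.label_eq z hzX y₀ hy₀)
      (h.label_eq w hwX y₀ hy₀) hvy₀ hμ
  · exact h.label_eq w hwX z hzY

lemma not_separableOn_compl_singleton (hU : ¬ SeparableOn Γ univ)
    (hsmall : ∀ S : Set V, S.Nontrivial → S.encard ≤ 4 → SeparableOn Γ S) (v : V) :
    ¬ SeparableOn Γ {v}ᶜ := by
  rintro ⟨X, Y, ℓ, h⟩
  obtain ⟨y₀, hy₀, hvy₀⟩ : ∃ y₀ ∈ Y, label Γ v y₀ ≠ ℓ := by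
    by_contra! hY
    exact hU (h.separableOn_univ hY)
  obtain ⟨x₀, hx₀, hx₀v⟩ : ∃ x₀ ∈ X, label Γ x₀ v ≠ ℓ := by
    by_contra! hX
    exact hU (h.symm.separableOn_univ fun a ha => congrArg Prod.swap (hX a ha))
  have hX := h.label_eq_of_separableOn_small hU hsmall hx₀ hx₀v hy₀ hvy₀
  -- the same argument for the reversed graph, where the roles of `X` and `Y` are exchanged
  have hY : ∀ b ∈ Y, label Γ b v = label Γ x₀ v :=
    h.flip.label_eq_of_separableOn_small (fun hs => hU hs.flip)
      (fun S hS hS4 => (hsmall S hS hS4).flip) hy₀ hvy₀ hx₀ hx₀v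
  refine hU (separableOn_univ_of_label_eq (X := {v}) (ℓ := label Γ v y₀) ⟨v, rfl⟩
    ⟨x₀, fun hx₀v' => h.subset_left hx₀ hx₀v'⟩ ?_)
  rintro _ rfl z hz
  rcases h.mem_or_mem hz with hzX | hzY
  · exact hX z hzX
  · exact (congrArg Prod.swap (hY z hzY)).trans (hX x₀ hx₀)

theorem exists_not_separableOn_compl_singleton [Finite V] (hV : 5 ≤ Nat.card V)
    (hU : ¬ SeparableOn Γ univ) : ∃ x, ¬ SeparableOn Γ {x}ᶜ := by
  by_cases hproper : ∀ S : Set V, S.Nontrivial → S ≠ univ → SeparableOn Γ S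
  · have hsmall : ∀ S : Set V, S.Nontrivial → S.encard ≤ 4 → SeparableOn Γ S := by
      refine fun S hS hS4 => hproper S hS ?_
      rintro rfl
      rw [encard_univ, ENat.card_eq_coe_natCard] at hS4
      norm_cast at hS4
      omega
    have : Nonempty V := Nat.card_pos_iff.mp (by omega) |>.1
    exact ⟨Classical.arbitrary V, not_separableOn_compl_singleton hU hsmall _⟩
  push Not at hproper
  obtain ⟨S, hS⟩ := hproper
  obtain ⟨A, -, ⟨hAnt, hAU, hA⟩, hAmax⟩ :=
    Finite.exists_le_maximal (p := fun A => A.Nontrivial ∧ A ≠ univ ∧ ¬ SeparableOn Γ A) hS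
  by_cases hAco : ∃ w, A = {w}ᶜ
  · obtain ⟨w, rfl⟩ := hAco
    exact ⟨w, hA⟩
  have hclan : IsClan Γ A := by
    refine isClan_of_forall_separableOn_insert hA fun w hw => ?_
    by_contra hsep
    have hwU : insert w A ≠ univ := fun hwU => hAco ⟨w, (IsCompl.of_eq
      (disjoint_iff.mp (disjoint_singleton_left.mpr hw))
      (by rwa [← singleton_union] at hwU)).compl_eq.symm⟩
    exact hw (hAmax ⟨hAnt.mono (subset_insert w A), hwU, hsep⟩ (subset_insert w A)
      (mem_insert w A))
  obtain ⟨a, ha, b, hb, hab⟩ := hAnt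
  exact ⟨a, hclan.not_separableOn_compl hU hAU ha hb hab.symm⟩

variable {Γ : V → V → Option ℝ}

lemma wClan_iff (hΓ : WOriented Γ) :
    WClan Γ X ↔ ∀ x ∉ X, ∃ t, ∀ a ∈ X, label Γ x a = t := by
  refine forall₂_congr fun x _ => ⟨?_, ?_⟩
  · rintro (h | ⟨r, h⟩ | ⟨r, h⟩)
    · exact ⟨(none, none), fun a ha => Prod.ext (h a ha).1 (h a ha).2⟩
    · exact ⟨(some r, none), fun a ha => Prod.ext (h a ha) (hΓ.2 x a (by simp [h a ha]))⟩
    · exact ⟨(none, some r), fun a ha => Prod.ext (hΓ.2 a x (by simp [h a ha])) (h a ha)⟩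
  · rintro ⟨⟨_ | r, _ | s⟩, h⟩
    · exact Or.inl fun a ha => Prod.ext_iff.mp (h a ha)
    · exact Or.inr (Or.inr ⟨s, fun a ha => congrArg Prod.snd (h a ha)⟩)
    all_goals exact Or.inr (Or.inl ⟨r, fun a ha => congrArg Prod.fst (h a ha)⟩)

lemma wSeparable_iff_separableOn_univ (hΓ : WOriented Γ) :
    WSeparable Γ ↔ SeparableOn Γ univ := by
  constructor
  · rintro ⟨X, Y, ⟨x₀, hx₀⟩, hY, hXY, hXYU, hcX, hcY⟩
    obtain ⟨ℓ, hℓ⟩ := (wClan_iff hΓ).mp hcY x₀ (disjoint_left.mp hXY hx₀)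
    refine ⟨X, Y, ℓ, ⟨x₀, hx₀⟩, hY, hXY, hXYU, fun a ha b hb => ?_⟩
    obtain ⟨t, ht⟩ := (wClan_iff hΓ).mp hcX b (disjoint_right.mp hXY hb)
    calc label Γ a b = (label Γ b a).swap := label_swap b a
      _ = (label Γ b x₀).swap := by rw [ht a ha, ht x₀ hx₀]
      _ = ℓ := hℓ b hb
  · rintro ⟨X, Y, ℓ, h⟩
    refine ⟨X, Y, h.left_nonempty, h.right_nonempty, h.disjoint, h.union_eq, ?_, ?_⟩
    · refine (wClan_iff hΓ).mpr fun y hy => ⟨ℓ.swap, fun a ha => ?_⟩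
      exact congrArg Prod.swap (h.label_eq a ha y ((h.mem_or_mem (mem_univ y)).resolve_left hy))
    · refine (wClan_iff hΓ).mpr fun x hx => ⟨ℓ, fun b hb => ?_⟩
      exact h.label_eq x ((h.mem_or_mem (mem_univ x)).resolve_right hx) b hb

end WGraph

open WGraph in
theorem stmt14 {n : ℕ} (hn : 5 ≤ n) (Γ : Fin n → Fin n → Option ℝ)
    (hΓ : WOriented Γ) (h : ¬ WSeparable Γ) :
    ∃ x : Fin n,
      ¬ WSeparable (fun a b : {y : Fin n // y ≠ x} => Γ (a : Fin n) (b : Fin n)) := by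
  obtain ⟨x, hx⟩ := exists_not_separableOn_compl_singleton (by simpa using hn)
    (mt (wSeparable_iff_separableOn_univ hΓ).mpr h)
  refine ⟨x, fun hsep => hx ?_⟩
  have hΓx : WOriented (fun a b : {y : Fin n // y ≠ x} => Γ a b) :=
    ⟨fun a => hΓ.1 a, fun a b => hΓ.2 a b⟩
  obtain ⟨X, Y, ℓ, hs⟩ := (wSeparable_iff_separableOn_univ hΓx).mp hsep
  have hs' := hs.image Subtype.val_injective
  rw [Subtype.range_coe_subtype] at hs'
  exact ⟨_, _, ℓ, hs'⟩
end

section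
/- Let A be a decomposable generalized tournament matrix with nontrivial clan I and let x ∈ I. Then A is inseparable if and only if the principal submatrix A[({1,…,n} \ I) ∪ {x}] is inseparable. -/
def Separable {m : Type*} (M : Matrix m m ℝ) : Prop :=
  ∃ X Y : Set m, X.Nonempty ∧ Y.Nonempty ∧ Disjoint X Y ∧ X ∪ Y = Set.univ ∧
    IsClan M X ∧ IsClan M Y

/-!
Collapsing the clan `I` onto its representative `x` (the map `clanCollapse I x`) turns `A` into
`A[S]`, `S = (univ \ I) ∪ {x}`, without changing any entry between points with distinct images,
because rows and columns of `A` are constant on `I` outside `I`. Hence the preimage of a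
separation of `A[S]` is a separation of `A`. Conversely a separation of `A` restricts to one of
`A[S]` unless one of its sides lies inside `I`; but then `I` itself is a side of a separation,
and `I` and its complement both meet `S`.
-/

open Set Function

section

variable {m m' : Type*}

def IsSeparation (M : Matrix m m ℝ) (X : Set m) : Prop :=
  X.Nonempty ∧ Xᶜ.Nonempty ∧ IsClan M X ∧ IsClan M Xᶜ

theorem separable_iff_exists_isSeparation {M : Matrix m m ℝ} :
    Separable M ↔ ∃ X, IsSeparation M X := by
  constructor
  · rintro ⟨X, Y, hX, hY, hdisj, hunion, hXc, hYc⟩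
    have hYX : Xᶜ = Y := (isCompl_iff.mpr ⟨hdisj, codisjoint_iff.mpr hunion⟩).compl_eq
    exact ⟨X, hX, hYX ▸ hY, hXc, hYX ▸ hYc⟩
  · rintro ⟨X, hX, hXc, hXcl, hXccl⟩
    exact ⟨X, Xᶜ, hX, hXc, disjoint_compl_right, union_compl_self X, hXcl, hXccl⟩

theorem IsSeparation.compl {M : Matrix m m ℝ} {X : Set m} (h : IsSeparation M X) :
    IsSeparation M Xᶜ := by
  obtain ⟨hX, hXc, hXcl, hXccl⟩ := h
  exact ⟨hXc, (compl_compl X).symm ▸ hX, hXccl, (compl_compl X).symm ▸ hXcl⟩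

theorem IsClan.submatrix_preimage {M : Matrix m m ℝ} {X : Set m} (hX : IsClan M X)
    (f : m' → m) : IsClan (M.submatrix f f) (f ⁻¹' X) :=
  fun i hi j hj k hk => hX (f i) hi (f j) hj (f k) hk

theorem IsSeparation.submatrix_preimage {M : Matrix m m ℝ} {X : Set m} (h : IsSeparation M X)
    {f : m' → m} (hfX : (f ⁻¹' X).Nonempty) (hfXc : (f ⁻¹' Xᶜ).Nonempty) :
    IsSeparation (M.submatrix f f) (f ⁻¹' X) := by
  rw [IsSeparation, ← preimage_compl]
  exact ⟨hfX, hfXc, h.2.2.1.submatrix_preimage f, h.2.2.2.submatrix_preimage f⟩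

/-- `M` is obtained from `N` by substituting each point `a` by the block `r ⁻¹' {a}`. -/
theorem IsClan.preimage_of_apply_eq {M : Matrix m m ℝ} {N : Matrix m' m' ℝ} {r : m → m'}
    (hMN : ∀ i j, r i ≠ r j → M i j = N (r i) (r j)) {X : Set m'} (hX : IsClan N X) :
    IsClan M (r ⁻¹' X) := by
  intro i hi j hj k hk
  have hik : r i ≠ r k := fun h => hk (show r k ∈ X from h ▸ hi)
  have hjk : r j ≠ r k := fun h => hk (show r k ∈ X from h ▸ hj)
  rw [hMN i k hik, hMN j k hjk, hMN k i hik.symm, hMN k j hjk.symm]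
  exact hX _ hi _ hj _ hk

theorem IsSeparation.preimage_of_apply_eq {M : Matrix m m ℝ} {N : Matrix m' m' ℝ} {r : m → m'}
    (hr : Surjective r) (hMN : ∀ i j, r i ≠ r j → M i j = N (r i) (r j)) {X : Set m'}
    (h : IsSeparation N X) : IsSeparation M (r ⁻¹' X) := by
  obtain ⟨hX, hXc, hXcl, hXccl⟩ := h
  rw [IsSeparation, ← preimage_compl]
  exact ⟨hX.preimage hr, hXc.preimage hr, hXcl.preimage_of_apply_eq hMN,
    hXccl.preimage_of_apply_eq hMN⟩

theorem IsSeparation.of_subset_isClan {M : Matrix m m ℝ} {X I : Set m} (h : IsSeparation M X)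
    (hI : IsClan M I) (hXI : X ⊆ I) (hIne : I ≠ univ) : IsSeparation M I := by
  obtain ⟨⟨y, hy⟩, -, -, hXccl⟩ := h
  refine ⟨⟨y, hXI hy⟩, nonempty_compl.mpr hIne, hI, ?_⟩
  intro i hi j hj k hk
  rw [notMem_compl_iff] at hk
  have hiX : i ∈ Xᶜ := fun h => hi (hXI h)
  have hjX : j ∈ Xᶜ := fun h => hj (hXI h)
  have hyX : y ∉ Xᶜ := not_not.mpr hy
  obtain ⟨hki, hik⟩ := hI k hk y (hXI hy) i hi
  obtain ⟨hkj, hjk⟩ := hI k hk y (hXI hy) j hj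
  obtain ⟨hiy, hyi⟩ := hXccl i hiX j hjX y hyX
  exact ⟨by rw [hik, hiy, hjk], by rw [hki, hyi, hkj]⟩

def clanCollapse (I : Set m) [DecidablePred (· ∈ I)] (x i : m) : m :=
  if i ∈ I then x else i

theorem clanCollapse_mem (I : Set m) [DecidablePred (· ∈ I)] (x i : m) :
    clanCollapse I x i ∈ univ \ I ∪ {x} := by
  unfold clanCollapse
  split_ifs with hi
  · exact Or.inr rfl
  · exact Or.inl ⟨trivial, hi⟩

theorem clanCollapse_of_mem {I : Set m} [DecidablePred (· ∈ I)] {x i : m}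
    (hi : i ∈ univ \ I ∪ {x}) : clanCollapse I x i = i := by
  unfold clanCollapse
  split_ifs with hiI
  · rcases hi with hi | rfl
    · exact absurd hiI hi.2
    · rfl
  · rfl

theorem IsClan.apply_eq_clanCollapse {M : Matrix m m ℝ} {I : Set m} [DecidablePred (· ∈ I)]
    (hI : IsClan M I) {x : m} (hx : x ∈ I) {i j : m}
    (hij : clanCollapse I x i ≠ clanCollapse I x j) :
    M i j = M (clanCollapse I x i) (clanCollapse I x j) := by
  unfold clanCollapse at hij ⊢
  by_cases hi : i ∈ I <;> by_cases hj : j ∈ I <;> simp only [hi, hj, if_true, if_false] at hij ⊢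
  · exact absurd rfl hij
  · exact (hI i hi x hx j hj).1
  · exact (hI j hj x hx i hi).2

theorem Separable.of_submatrix_of_isClan {M : Matrix m m ℝ} {I : Set m} {x : m}
    (hI : IsClan M I) (hx : x ∈ I)
    (h : Separable (M.submatrix (Subtype.val : ↥(univ \ I ∪ {x}) → m) Subtype.val)) :
    Separable M := by
  classical
  let r := codRestrict (clanCollapse I x) _ (clanCollapse_mem I x)
  have hr : Surjective r := fun s => ⟨s, Subtype.ext (clanCollapse_of_mem s.2)⟩
  obtain ⟨X, hX⟩ := separable_iff_exists_isSeparation.mp h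
  exact separable_iff_exists_isSeparation.mpr ⟨_, hX.preimage_of_apply_eq hr
    fun i j hij => hI.apply_eq_clanCollapse hx fun h => hij (Subtype.ext h)⟩

theorem Separable.submatrix_of_isClan {M : Matrix m m ℝ} {I : Set m} {x : m}
    (hI : IsClan M I) (hIne : I ≠ univ) (hx : x ∈ I) (h : Separable M) :
    Separable (M.submatrix (Subtype.val : ↥(univ \ I ∪ {x}) → m) Subtype.val) := by
  set f : ↥(univ \ I ∪ {x}) → m := Subtype.val
  have hmeets : ∀ X, IsSeparation M X → ¬ IsSeparation M I → (f ⁻¹' X).Nonempty := by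
    intro X hX hIsep
    by_contra hempty
    refine hIsep (hX.of_subset_isClan hI (fun y hy => ?_) hIne)
    by_contra hyI
    exact hempty ⟨⟨y, Or.inl ⟨trivial, hyI⟩⟩, hy⟩
  refine separable_iff_exists_isSeparation.mpr ?_
  by_cases hIsep : IsSeparation M I
  · obtain ⟨z, hz⟩ := hIsep.2.1
    exact ⟨_, hIsep.submatrix_preimage ⟨⟨x, Or.inr rfl⟩, hx⟩ ⟨⟨z, Or.inl ⟨trivial, hz⟩⟩, hz⟩⟩
  · obtain ⟨X, hX⟩ := separable_iff_exists_isSeparation.mp h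
    exact ⟨_, hX.submatrix_preimage (hmeets X hX hIsep) (hmeets Xᶜ hX.compl hIsep)⟩

end

theorem stmt15_general {n : ℕ} (A : Matrix (Fin n) (Fin n) ℝ)
    (I : Set (Fin n)) (hI : IsClan A I) (hIne : I ≠ Set.univ)
    (x : Fin n) (hx : x ∈ I) :
    ¬ Separable A ↔
      ¬ Separable (A.submatrix
        (Subtype.val : ↥((Set.univ \ I) ∪ {x}) → Fin n)
        (Subtype.val : ↥((Set.univ \ I) ∪ {x}) → Fin n)) :=
  not_congr ⟨Separable.submatrix_of_isClan hI hIne hx, Separable.of_submatrix_of_isClan hI hx⟩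

theorem stmt15 {n : ℕ} (A : Matrix (Fin n) (Fin n) ℝ) (hA : IsGTM A)
    (I : Set (Fin n)) (hI : IsClan A I) (hI2 : 2 ≤ I.ncard) (hIne : I ≠ Set.univ)
    (x : Fin n) (hx : x ∈ I) :
    ¬ Separable A ↔
      ¬ Separable (A.submatrix
        (Subtype.val : ↥((Set.univ \ I) ∪ {x}) → Fin n)
        (Subtype.val : ↥((Set.univ \ I) ∪ {x}) → Fin n)) :=
  stmt15_general A I hI hIne x hx
end

section
/- Let A be an n×n generalized tournament matrix and α > 1/2. If for every clan I of A with |I| ≥ 2 the principal submatrix A[I] is α-separable, then A is α-linear. -/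
/-- `M` is `α`-separable: a bipartition `X, Y` with `M x y = α` for `x ∈ X`, `y ∈ Y`. -/
def AlphaSeparable {m : Type*} (M : Matrix m m ℝ) (α : ℝ) : Prop :=
  ∃ X Y : Set m, X.Nonempty ∧ Y.Nonempty ∧ Disjoint X Y ∧ X ∪ Y = Set.univ ∧
    ∀ x ∈ X, ∀ y ∈ Y, M x y = α

/-- `M` is `α`-linear: an ordering of the indices with `M x_i x_j = α` for `i < j`. -/
def AlphaLinear {n : ℕ} (M : Matrix (Fin n) (Fin n) ℝ) (α : ℝ) : Prop :=
  ∃ σ : Equiv.Perm (Fin n), ∀ i j : Fin n, i < j → M (σ i) (σ j) = α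

/-!
If `X ∪ Y` is an α-separation of a clan `I` (every entry from `X` to `Y` equals `α`), then
`M y x = 1 - α` for the same pairs, so `X` and `Y` are again clans. By strong induction on the
size of the clan, an α-linear order of `X` followed by one of `Y` is an α-linear order of `I`.
-/

lemma IsGTM.apply_add_apply_swap {n : ℕ} {M : Matrix (Fin n) (Fin n) ℝ} (hM : IsGTM M)
    {i j : Fin n} (hij : i ≠ j) : M i j + M j i = 1 := by
  simpa [Matrix.one_apply_ne hij] using congrFun (congrFun hM.2 i) j

section Clan

variable {m : Type*} {M : Matrix m m ℝ} {α : ℝ}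

lemma isClan_univ : IsClan M Set.univ :=
  fun _ _ _ _ k hk => absurd (Set.mem_univ k) hk

lemma IsClan.of_subset {I X : Set m} (hI : IsClan M I) (hXI : X ⊆ I)
    (h : ∀ k ∈ I, k ∉ X → ∀ i ∈ X, ∀ j ∈ X, M i k = M j k ∧ M k i = M k j) :
    IsClan M X := by
  intro i hi j hj k hk
  by_cases hkI : k ∈ I
  · exact h k hkI hk i hi j hj
  · exact hI i (hXI hi) j (hXI hj) k hkI

lemma AlphaSeparable.exists_split_of_submatrix {I : Set m}
    (h : AlphaSeparable (M.submatrix ((↑) : I → m) (↑)) α) :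
    ∃ X Y : Set m, X.Nonempty ∧ Y.Nonempty ∧ Disjoint X Y ∧ X ∪ Y = I ∧
      ∀ x ∈ X, ∀ y ∈ Y, M x y = α := by
  obtain ⟨X, Y, hX, hY, hXY, hU, hα⟩ := h
  refine ⟨(↑) '' X, (↑) '' Y, hX.image _, hY.image _,
    (Set.disjoint_image_iff Subtype.val_injective).2 hXY, ?_, ?_⟩
  · rw [← Set.image_union, hU, Set.image_univ, Subtype.range_coe]
  · rintro _ ⟨x, hx, rfl⟩ _ ⟨y, hy, rfl⟩
    exact hα x hx y hy

variable (hM : ∀ i j, i ≠ j → M i j + M j i = 1)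
include hM

lemma IsClan.left_of_split {I X Y : Set m} (hI : IsClan M I) (hXY : Disjoint X Y)
    (hU : X ∪ Y = I) (hα : ∀ x ∈ X, ∀ y ∈ Y, M x y = α) : IsClan M X := by
  refine hI.of_subset (hU ▸ Set.subset_union_left) fun k hkI hkX i hi j hj => ?_
  have hkY : k ∈ Y := by rw [← hU] at hkI; exact hkI.resolve_left hkX
  have hik := hM i k (hXY.ne_of_mem hi hkY)
  have hjk := hM j k (hXY.ne_of_mem hj hkY)
  rw [hα i hi k hkY] at hik ⊢
  rw [hα j hj k hkY] at hjk ⊢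
  exact ⟨rfl, by linarith⟩

lemma IsClan.right_of_split {I X Y : Set m} (hI : IsClan M I) (hXY : Disjoint X Y)
    (hU : X ∪ Y = I) (hα : ∀ x ∈ X, ∀ y ∈ Y, M x y = α) : IsClan M Y := by
  refine hI.of_subset (hU ▸ Set.subset_union_right) fun k hkI hkY i hi j hj => ?_
  have hkX : k ∈ X := by rw [← hU] at hkI; exact hkI.resolve_right hkY
  have hki := hM k i (hXY.ne_of_mem hkX hi)
  have hkj := hM k j (hXY.ne_of_mem hkX hj)
  rw [hα k hkX i hi] at hki ⊢
  rw [hα k hkX j hj] at hkj ⊢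
  exact ⟨by linarith, rfl⟩

lemma IsClan.exists_pairwise_list [Finite m]
    (h : ∀ I : Set m, IsClan M I → 2 ≤ I.ncard →
      AlphaSeparable (M.submatrix ((↑) : I → m) (↑)) α)
    {I : Set m} (hI : IsClan M I) :
    ∃ l : List m, l.Nodup ∧ (∀ x, x ∈ l ↔ x ∈ I) ∧ l.Pairwise (fun a b => M a b = α) := by
  induction hk : I.ncard using Nat.strong_induction_on generalizing I with
  | _ k ih =>
  subst hk
  rcases lt_or_ge I.ncard 2 with hsmall | hlarge
  · rcases (Set.ncard_le_one_iff_eq).1 (Nat.le_of_lt_succ hsmall) with rfl | ⟨a, rfl⟩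
    · exact ⟨[], List.nodup_nil, by simp, List.Pairwise.nil⟩
    · exact ⟨[a], List.nodup_singleton a, by simp, List.pairwise_singleton _ a⟩
  obtain ⟨X, Y, hX, hY, hXY, hU, hα⟩ := (h I hI hlarge).exists_split_of_submatrix
  have hXI : X ⊂ I :=
    hU ▸ Set.ssubset_union_left_iff.2 fun hYX => hY.ne_empty (hXY.symm.eq_bot_of_le hYX)
  have hYI : Y ⊂ I :=
    hU ▸ Set.ssubset_union_right_iff.2 fun hXY_sub => hX.ne_empty (hXY.eq_bot_of_le hXY_sub)
  obtain ⟨lX, hlXnd, hlX, hlXα⟩ :=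
    ih _ (Set.ncard_lt_ncard hXI) (hI.left_of_split hM hXY hU hα) rfl
  obtain ⟨lY, hlYnd, hlY, hlYα⟩ :=
    ih _ (Set.ncard_lt_ncard hYI) (hI.right_of_split hM hXY hU hα) rfl
  refine ⟨lX ++ lY, ?_, fun x => by simp [hlX, hlY, ← hU], ?_⟩
  · refine hlXnd.append hlYnd fun x hxX hxY => ?_
    exact hXY.ne_of_mem ((hlX x).1 hxX) ((hlY x).1 hxY) rfl
  · exact List.pairwise_append.2
      ⟨hlXα, hlYα, fun x hx y hy => hα x ((hlX x).1 hx) y ((hlY y).1 hy)⟩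

end Clan

lemma alphaLinear_of_pairwise {n : ℕ} {M : Matrix (Fin n) (Fin n) ℝ} {α : ℝ} {l : List (Fin n)}
    (hnd : l.Nodup) (hmem : ∀ x, x ∈ l) (hl : l.Pairwise (fun a b => M a b = α)) :
    AlphaLinear M α := by
  let e := hnd.getEquivOfForallMemList l hmem
  have hlen : l.length = n := by simpa using Fintype.card_congr e
  refine ⟨(finCongr hlen.symm).trans e, fun i j hij => ?_⟩
  exact List.pairwise_iff_get.1 hl _ _ hij

theorem stmt16_general {n : ℕ} (A : Matrix (Fin n) (Fin n) ℝ) (hA : IsGTM A)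
    (α : ℝ)
    (h : ∀ I : Set (Fin n), IsClan A I → 2 ≤ I.ncard →
      AlphaSeparable (A.submatrix (Subtype.val : ↥I → Fin n) (Subtype.val : ↥I → Fin n)) α) :
    AlphaLinear A α := by
  obtain ⟨l, hnd, hmem, hl⟩ :=
    isClan_univ.exists_pairwise_list (fun _ _ => hA.apply_add_apply_swap) h
  exact alphaLinear_of_pairwise hnd (fun x => (hmem x).2 trivial) hl

theorem stmt16 {n : ℕ} (A : Matrix (Fin n) (Fin n) ℝ) (hA : IsGTM A)
    (α : ℝ) (hα : 1 / 2 < α)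
    (h : ∀ I : Set (Fin n), IsClan A I → 2 ≤ I.ncard →
      AlphaSeparable (A.submatrix (Subtype.val : ↥I → Fin n) (Subtype.val : ↥I → Fin n)) α) :
    AlphaLinear A α :=
  stmt16_general A hA α h
end
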